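/- arXiv:2408.17191 — 11 statements merged into one kernel-verified Lean document; each statement's English description precedes it below -/
import Mathlib

section
/- If π = {V₁, V₂, ..., V_k} is a tournament transitive partition of a graph G, then π is also a transitive partition of the complement graph Ḡ. Consequently, TTr(G) ≤ min{Tr(G), Tr(Ḡ)}. -/
open SimpleGraph

variable {V : Type*}

/-- `A` dominates `B` if every vertex of `B` has a neighbour in `A`. -/
def Dominates (G : SimpleGraph V) (A B : Set V) : Prop :=
  ∀ b ∈ B, ∃ a ∈ A, G.Adj a b

/-- An ordered partition `V₁,…,V_k` (encoded as `f : V → Fin k`, surjective,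
with `V_i = f ⁻¹' {i}`) is a transitive partition if `V_i` dominates `V_j` for `i < j`. -/
def IsTrPartition (G : SimpleGraph V) {k : ℕ} (f : V → Fin k) : Prop :=
  Function.Surjective f ∧
    ∀ i j : Fin k, i < j → Dominates G (f ⁻¹' {i}) (f ⁻¹' {j})

/-- Tournament transitive partition: additionally `V_j` does not dominate `V_i` for `i < j`. -/
def IsTTPartition (G : SimpleGraph V) {k : ℕ} (f : V → Fin k) : Prop :=
  Function.Surjective f ∧
    ∀ i j : Fin k, i < j →
      Dominates G (f ⁻¹' {i}) (f ⁻¹' {j}) ∧ ¬ Dominates G (f ⁻¹' {j}) (f ⁻¹' {i})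

/-- Transitivity: the maximum size of a transitive partition. -/
noncomputable def Tr (G : SimpleGraph V) : ℕ :=
  sSup {k | ∃ f : V → Fin k, IsTrPartition G f}

/-- Tournament transitivity: the maximum size of a tournament transitive partition. -/
noncomputable def TTr (G : SimpleGraph V) : ℕ :=
  sSup {k | ∃ f : V → Fin k, IsTTPartition G f}

lemma tt_to_compl (G : SimpleGraph V) {k : ℕ} (f : V → Fin k)
    (h : IsTTPartition G f) : IsTrPartition Gᶜ f := by
  obtain ⟨hsurj, h⟩ := h
  refine ⟨hsurj, fun i j hij b hb => ?_⟩
  obtain ⟨-, hnd⟩ := h i j hij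
  simp only [Dominates, not_forall] at hnd
  obtain ⟨a, ha, hna⟩ := hnd
  push_neg at hna
  refine ⟨a, ha, ?_, fun hadj => hna b hb hadj.symm⟩
  intro hab
  subst hab
  exact absurd (ha.symm.trans hb) hij.ne

lemma tt_to_tr (G : SimpleGraph V) {k : ℕ} (f : V → Fin k)
    (h : IsTTPartition G f) : IsTrPartition G f :=
  ⟨h.1, fun i j hij => (h.2 i j hij).1⟩

lemma tr_bdd [Fintype V] (G : SimpleGraph V) :
    BddAbove {k | ∃ f : V → Fin k, IsTrPartition G f} := by
  refine ⟨Fintype.card V, fun k hk => ?_⟩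
  obtain ⟨f, hf, -⟩ := hk
  simpa using Fintype.card_le_of_surjective f hf

lemma tt_nonempty [Fintype V] (G : SimpleGraph V) :
    {k | ∃ f : V → Fin k, IsTTPartition G f}.Nonempty := by
  by_cases h : Nonempty V
  · refine ⟨1, fun _ => 0, fun i => ⟨Classical.arbitrary V, Subsingleton.elim _ _⟩,
      fun i j hij => absurd hij (by omega)⟩
  · exact ⟨0, fun v => absurd ⟨v⟩ h, fun i => i.elim0,
      fun i j hij => i.elim0⟩

theorem stmt_0 [Fintype V] (G : SimpleGraph V) :
    (∀ (k : ℕ) (f : V → Fin k), IsTTPartition G f → IsTrPartition Gᶜ f) ∧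
      TTr G ≤ min (Tr G) (Tr Gᶜ) := by
  refine ⟨fun k f h => tt_to_compl G f h, le_min ?_ ?_⟩
  · exact csSup_le (tt_nonempty G) fun k ⟨f, hf⟩ =>
      le_csSup (tr_bdd G) ⟨f, tt_to_tr G f hf⟩
  · exact csSup_le (tt_nonempty G) fun k ⟨f, hf⟩ =>
      le_csSup (tr_bdd Gᶜ) ⟨f, tt_to_compl G f hf⟩
end

section
/- For any graph G on n vertices, TTr(G) ≤ min{Δ(G) + 1, n − δ(G)}, where Δ(G) and δ(G) are the maximum and minimum degrees of G. -/
open SimpleGraph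

variable {V : Type*}

lemma key_bound [Fintype V] (G : SimpleGraph V) [DecidableRel G.Adj] {k : ℕ}
    (f : V → Fin k) (hf : IsTTPartition G f) :
    k ≤ min (G.maxDegree + 1) (Fintype.card V - G.minDegree) := by
  classical
  obtain ⟨hsurj, hdom⟩ := hf
  match k with
  | 0 => simp
  | m + 1 =>
    set t : Fin (m + 1) := Fin.last m with ht
    obtain ⟨x, hx⟩ := hsurj t
    -- x has a neighbour in each earlier part
    have h1 : ∀ i : Fin m, ∃ a, f a = i.castSucc ∧ G.Adj x a := by
      intro i
      obtain ⟨a, ha, hadj⟩ := (hdom i.castSucc t (Fin.castSucc_lt_last i)).1 x hx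
      exact ⟨a, ha, hadj.symm⟩
    choose g hg1 hg2 using h1
    have hginj : Function.Injective g := fun i j hij => by
      have h := (hg1 i).symm.trans (hij ▸ hg1 j)
      exact Fin.castSucc_injective m h
    have hm1 : m ≤ G.degree x := by
      have h : (Finset.univ : Finset (Fin m)).card ≤ (G.neighborFinset x).card :=
        Finset.card_le_card_of_injOn g
          (fun i _ => by simp [SimpleGraph.mem_neighborFinset, hg2 i])
          (fun i _ j _ h => hginj h)
      rw [Finset.card_univ, Fintype.card_fin, G.card_neighborFinset_eq_degree] at h
      exact h
    -- each earlier part has a vertex with no neighbour in the last part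
    have h2 : ∀ i : Fin m, ∃ b, f b = i.castSucc ∧ ∀ a, f a = t → ¬ G.Adj a b := by
      intro i
      have hnd := (hdom i.castSucc t (Fin.castSucc_lt_last i)).2
      unfold Dominates at hnd
      push_neg at hnd
      obtain ⟨b, hb, hnb⟩ := hnd
      exact ⟨b, hb, fun a ha => hnb a ha⟩
    choose y hy1 hy2 using h2
    have hyinj : Function.Injective y := fun i j hij => by
      have h := (hy1 i).symm.trans (hij ▸ hy1 j)
      exact Fin.castSucc_injective m h
    have hcard : G.degree x + (m + 1) ≤ Fintype.card V := by
      set S : Finset V := insert x (Finset.image y Finset.univ) with hS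
      have hxy : ∀ i, y i ≠ x := fun i h => by
        have h2 := hy1 i
        rw [h, hx] at h2
        exact absurd h2 (Fin.castSucc_lt_last i).ne'
      have hScard : S.card = m + 1 := by
        rw [hS, Finset.card_insert_of_notMem, Finset.card_image_of_injective _ hyinj,
          Finset.card_univ, Fintype.card_fin]
        simp only [Finset.mem_image]
        rintro ⟨i, -, hi⟩
        exact hxy i hi
      have hdisj : Disjoint (G.neighborFinset x) S := by
        rw [hS, Finset.disjoint_insert_right]
        refine ⟨by simp, ?_⟩
        rw [Finset.disjoint_right]
        rintro v hv hvN
        obtain ⟨i, -, rfl⟩ := Finset.mem_image.mp hv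
        rw [SimpleGraph.mem_neighborFinset] at hvN
        exact hy2 i x hx hvN
      calc G.degree x + (m + 1) = (G.neighborFinset x ∪ S).card := by
            rw [Finset.card_union_of_disjoint hdisj, hScard,
              SimpleGraph.card_neighborFinset_eq_degree]
        _ ≤ Fintype.card V := Finset.card_le_univ _
    have hΔ : G.degree x ≤ G.maxDegree := G.degree_le_maxDegree x
    have hδ : G.minDegree ≤ G.degree x := G.minDegree_le_degree x
    exact le_min (by omega) (by omega)

theorem stmt_1 [Fintype V] (G : SimpleGraph V) [DecidableRel G.Adj] :
    TTr G ≤ min (G.maxDegree + 1) (Fintype.card V - G.minDegree) := by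
  apply csSup_le'
  rintro k ⟨f, hf⟩
  exact key_bound G f hf
end

section
/- For any graph G on n vertices, 1 ≤ TTr(G) ≤ ⌊(n+1)/2⌋. -/
open SimpleGraph

variable {V : Type*}

theorem stmt_2 [Fintype V] [Nonempty V] (G : SimpleGraph V) :
    1 ≤ TTr G ∧ TTr G ≤ (Fintype.card V + 1) / 2 := by
  classical
  set n := Fintype.card V
  -- key bound on any k in the set
  have key : ∀ k ∈ {k | ∃ f : V → Fin k, IsTTPartition G f}, k ≤ (n + 1) / 2 := by
    rintro k ⟨f, hsurj, hdom⟩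
    have hk0 : k ≠ 0 := by
      intro h
      exact (h ▸ f (Classical.arbitrary V)).elim0
    obtain ⟨m, rfl⟩ := Nat.exists_eq_succ_of_ne_zero hk0
    set c : Fin (m + 1) → ℕ := fun i => (Finset.univ.filter (fun v => f v = i)).card with hc
    have hcard : n = ∑ i : Fin (m + 1), c i := by
      simpa [n, c] using Finset.card_eq_sum_card_fiberwise
        (f := f) (s := (Finset.univ : Finset V)) (t := Finset.univ)
        (fun a _ => Finset.mem_univ _)
    have hone : ∀ i, 1 ≤ c i := by
      intro i
      obtain ⟨v, hv⟩ := hsurj i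
      have : v ∈ Finset.univ.filter (fun v => f v = i) := by simp [hv]
      exact Finset.card_pos.2 ⟨v, this⟩
    have htwo : ∀ i : Fin (m + 1), i ≠ Fin.last m → 2 ≤ c i := by
      intro i hi
      have hlt : i < Fin.last m := lt_of_le_of_ne (Fin.le_last i) hi
      obtain ⟨hd, hnd⟩ := hdom i (Fin.last m) hlt
      -- x ∈ fiber i with no neighbour in fiber last
      rw [Dominates] at hnd
      push_neg at hnd
      obtain ⟨x, hx, hxno⟩ := hnd
      -- y ∈ fiber last, its neighbour a ∈ fiber i
      obtain ⟨y, hy⟩ := hsurj (Fin.last m)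
      obtain ⟨a, ha, hadj⟩ := hd y (by simpa using hy)
      have hax : a ≠ x := by
        intro h
        exact hxno y (by simpa using hy) (h ▸ hadj.symm)
      have : 1 < c i := by
        rw [Finset.one_lt_card_iff]
        refine ⟨a, x, ?_, ?_, hax⟩ <;> simp_all [Set.mem_preimage]
      exact this
    have hsum : 2 * m + 1 ≤ ∑ i : Fin (m + 1), c i := by
      rw [← Finset.sum_erase_add _ _ (Finset.mem_univ (Fin.last m))]
      have h1 : 2 * m ≤ ∑ i ∈ Finset.univ.erase (Fin.last m), c i := by
        calc 2 * m = ∑ _i ∈ Finset.univ.erase (Fin.last m), 2 := by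
              simp [Finset.card_erase_of_mem, mul_comm]
          _ ≤ _ := Finset.sum_le_sum (fun i hi => htwo i (Finset.ne_of_mem_erase hi))
      have h2 : 1 ≤ c (Fin.last m) := hone _
      omega
    have : 2 * m + 1 ≤ n := hcard ▸ hsum
    omega
  have hbdd : BddAbove {k | ∃ f : V → Fin k, IsTTPartition G f} := ⟨(n + 1) / 2, key⟩
  have hmem : 1 ∈ {k | ∃ f : V → Fin k, IsTTPartition G f} := by
    refine ⟨fun _ => 0, fun i => ⟨Classical.arbitrary V, Subsingleton.elim _ _⟩, ?_⟩
    intro i j hij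
    exact absurd hij (by omega)
  constructor
  · exact le_csSup hbdd hmem
  · exact csSup_le ⟨1, hmem⟩ key
end

section
/- If a graph G has a tournament transitive partition of order k, then for every j with 1 ≤ j ≤ k, G has a tournament transitive partition of order j. -/
open SimpleGraph

variable {V : Type*}

theorem stmt_4 [Fintype V] (G : SimpleGraph V) (k : ℕ) (f : V → Fin k)
    (hf : IsTTPartition G f) (j : ℕ) (h1 : 1 ≤ j) (hj : j ≤ k) :
    ∃ g : V → Fin j, IsTTPartition G g := by
  obtain ⟨hsurj, hdom⟩ := hf
  set d := k - j with hd
  have hk : k = j + d := by omega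
  refine ⟨fun v => ⟨(f v).val - d, by have := (f v).isLt; omega⟩, ?_, ?_⟩
  · intro i
    obtain ⟨v, hv⟩ := hsurj ⟨i.val + d, by omega⟩
    refine ⟨v, Fin.ext ?_⟩
    show (f v).val - d = i.val
    rw [hv]
    show i.val + d - d = i.val
    omega
  · intro i i' hlt
    have hi' : 0 < i'.val := lt_of_le_of_lt (Nat.zero_le _) hlt
    have key : ∀ a : V,
        (⟨(f a).val - d, by have := (f a).isLt; omega⟩ : Fin j) = i' →
        f a = ⟨i'.val + d, by omega⟩ := by
      intro a ha
      have h2 : (f a).val - d = i'.val := congrArg Fin.val ha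
      refine Fin.ext ?_
      show (f a).val = i'.val + d
      omega
    have hlt' : (⟨i.val + d, by omega⟩ : Fin k) < ⟨i'.val + d, by omega⟩ := by
      show i.val + d < i'.val + d
      omega
    obtain ⟨hD, hND⟩ := hdom ⟨i.val + d, by omega⟩ ⟨i'.val + d, by omega⟩ hlt'
    constructor
    · intro b hb
      have hfb : f b = ⟨i'.val + d, by omega⟩ := key b hb
      obtain ⟨a, ha, hadj⟩ := hD b hfb
      refine ⟨a, ?_, hadj⟩
      have h3 : (f a).val = i.val + d := congrArg Fin.val ha
      refine Fin.ext ?_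
      show (f a).val - d = i.val
      omega
    · intro hcon
      apply hND
      intro b hb
      have hfb : (f b).val = i.val + d := congrArg Fin.val hb
      have hgb : (⟨(f b).val - d, by have := (f b).isLt; omega⟩ : Fin j) = i :=
        Fin.ext (by show (f b).val - d = i.val; omega)
      obtain ⟨a, ha, hadj⟩ := hcon b hgb
      exact ⟨a, key a ha, hadj⟩
end

section
/- The tournament transitivity of the path P_n on n vertices equals 1 if n ∈ {1, 2}, equals 2 if n ∈ {3, 4}, and equals 3 if n ≥ 5. -/
open SimpleGraph

variable {V : Type*}

/-- A decidable reformulation of `IsTTPartition` for path graphs. -/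
def TTP' (n k : ℕ) (f : Fin n → Fin k) : Prop :=
  (∀ i, ∃ v, f v = i) ∧
    ∀ i j : Fin k, i < j →
      ((∀ b, f b = j → ∃ a, f a = i ∧ (a.val + 1 = b.val ∨ b.val + 1 = a.val)) ∧
       ¬ (∀ b, f b = i → ∃ a, f a = j ∧ (a.val + 1 = b.val ∨ b.val + 1 = a.val)))

instance (n k : ℕ) (f : Fin n → Fin k) : Decidable (TTP' n k f) := by
  unfold TTP'; infer_instance

lemma ttp_iff (n k : ℕ) (f : Fin n → Fin k) :
    IsTTPartition (pathGraph n) f ↔ TTP' n k f := by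
  simp [IsTTPartition, TTP', Dominates, Function.Surjective, Set.mem_preimage,
    Set.mem_singleton_iff, pathGraph_adj]

lemma ttp_le_three {n k : ℕ} (f : Fin n → Fin k) (h : IsTTPartition (pathGraph n) f) :
    k ≤ 3 := by
  by_contra hk
  push_neg at hk
  have h4 : 4 ≤ k := hk
  obtain ⟨hs, hd⟩ := h
  obtain ⟨v, hv⟩ := hs ⟨3, by omega⟩
  have get : ∀ (m : ℕ) (_ : m < 3),
      ∃ a : Fin n, f a = ⟨m, by omega⟩ ∧ (a.val + 1 = v.val ∨ v.val + 1 = a.val) := by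
    intro m hm
    obtain ⟨a, ha1, ha2⟩ := (hd ⟨m, by omega⟩ ⟨3, by omega⟩
      (by simp only [Fin.mk_lt_mk]; omega)).1 v (by simp [hv])
    exact ⟨a, ha1, pathGraph_adj.mp ha2⟩
  obtain ⟨a0, ha0, hn0⟩ := get 0 (by omega)
  obtain ⟨a1, ha1, hn1⟩ := get 1 (by omega)
  obtain ⟨a2, ha2, hn2⟩ := get 2 (by omega)
  have key : ∀ (p q : Fin n), p.val = q.val → f p = f q := by
    intro p q hpq; rw [Fin.ext hpq]
  have : a0.val = a1.val ∨ a0.val = a2.val ∨ a1.val = a2.val := by omega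
  rcases this with h | h | h
  · have := key _ _ h; rw [ha0, ha1] at this; simp [Fin.ext_iff] at this
  · have := key _ _ h; rw [ha0, ha2] at this; simp [Fin.ext_iff] at this
  · have := key _ _ h; rw [ha1, ha2] at this; simp [Fin.ext_iff] at this

lemma mem_one {n : ℕ} (hn : 1 ≤ n) :
    ∃ f : Fin n → Fin 1, IsTTPartition (pathGraph n) f := by
  refine ⟨fun _ => 0, fun i => ⟨⟨0, hn⟩, Subsingleton.elim _ _⟩, fun i j hij => ?_⟩
  have hi := i.isLt; have hj := j.isLt
  rw [Fin.lt_def] at hij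
  omega

lemma mem_three {n : ℕ} (hn : 6 ≤ n) :
    ∃ f : Fin n → Fin 3, IsTTPartition (pathGraph n) f := by
  refine ⟨fun v => ⟨if v.val = 3 then 2 else if v.val = 2 ∨ v.val = 5 then 1 else 0,
      by split_ifs <;> omega⟩, (ttp_iff ..).mpr ⟨?_, ?_⟩⟩
  · intro i
    fin_cases i
    · exact ⟨⟨0, by omega⟩, by simp [Fin.ext_iff]⟩
    · exact ⟨⟨2, by omega⟩, by simp [Fin.ext_iff]⟩
    · exact ⟨⟨3, by omega⟩, by simp [Fin.ext_iff]⟩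
  · intro i j hij
    fin_cases i <;> fin_cases j <;> simp only [Fin.lt_def] at hij <;> try omega
    -- (0,1)
    · constructor
      · intro b hb
        rw [Fin.ext_iff] at hb
        simp only at hb
        split_ifs at hb with h1 h2 <;> try omega
        exact ⟨⟨b.val - 1, by omega⟩,
          by rw [Fin.ext_iff]; simp only [Fin.val_mk]; split_ifs <;> omega, by simp; omega⟩
      · intro hcon
        obtain ⟨a, ha, hadj⟩ := hcon ⟨0, by omega⟩ (by rw [Fin.ext_iff]; simp)
        rw [Fin.ext_iff] at ha
        simp only at ha hadj
        split_ifs at ha <;> omega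
    -- (0,2)
    · constructor
      · intro b hb
        rw [Fin.ext_iff] at hb
        simp only at hb
        split_ifs at hb with h1 <;> try omega
        exact ⟨⟨4, by omega⟩, by rw [Fin.ext_iff]; simp, by simp; omega⟩
      · intro hcon
        obtain ⟨a, ha, hadj⟩ := hcon ⟨0, by omega⟩ (by rw [Fin.ext_iff]; simp)
        rw [Fin.ext_iff] at ha
        simp only at ha hadj
        split_ifs at ha <;> omega
    -- (1,2)
    · constructor
      · intro b hb
        rw [Fin.ext_iff] at hb
        simp only at hb
        split_ifs at hb with h1 <;> try omega
        exact ⟨⟨2, by omega⟩, by rw [Fin.ext_iff]; simp, by simp; omega⟩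
      · intro hcon
        obtain ⟨a, ha, hadj⟩ := hcon ⟨5, by omega⟩ (by rw [Fin.ext_iff]; simp)
        rw [Fin.ext_iff] at ha
        simp only at ha hadj
        split_ifs at ha <;> omega

lemma sSup_eq' {S : Set ℕ} {m : ℕ} (hm : m ∈ S) (hub : ∀ k ∈ S, k ≤ m) : sSup S = m :=
  le_antisymm (csSup_le ⟨m, hm⟩ hub) (le_csSup ⟨m, fun _ h => hub _ h⟩ hm)

theorem stmt_6 (n : ℕ) :
    (n = 1 ∨ n = 2 → TTr (pathGraph n) = 1) ∧
    (n = 3 ∨ n = 4 → TTr (pathGraph n) = 2) ∧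
    (5 ≤ n → TTr (pathGraph n) = 3) := by
  refine ⟨?_, ?_, ?_⟩
  · rintro (rfl | rfl) <;> unfold TTr
    · refine sSup_eq' (mem_one (by omega)) ?_
      rintro k ⟨f, hf⟩
      have h3 := ttp_le_three f hf
      have h' := (ttp_iff _ _ f).mp hf
      interval_cases k
      · omega
      · omega
      · exact absurd ⟨f, h'⟩ (show ¬∃ g : Fin 1 → Fin 2, TTP' 1 2 g by decide)
      · exact absurd ⟨f, h'⟩ (show ¬∃ g : Fin 1 → Fin 3, TTP' 1 3 g by decide)
    · refine sSup_eq' (mem_one (by omega)) ?_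
      rintro k ⟨f, hf⟩
      have h3 := ttp_le_three f hf
      have h' := (ttp_iff _ _ f).mp hf
      interval_cases k
      · omega
      · omega
      · exact absurd ⟨f, h'⟩ (show ¬∃ g : Fin 2 → Fin 2, TTP' 2 2 g by decide)
      · exact absurd ⟨f, h'⟩ (show ¬∃ g : Fin 2 → Fin 3, TTP' 2 3 g by decide)
  · rintro (rfl | rfl) <;> unfold TTr
    · have hmem : ∃ f : Fin 3 → Fin 2, TTP' 3 2 f := by decide
      obtain ⟨f0, hf0⟩ := hmem
      refine sSup_eq' ⟨f0, (ttp_iff _ _ f0).mpr hf0⟩ ?_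
      rintro k ⟨f, hf⟩
      have h3 := ttp_le_three f hf
      have h' := (ttp_iff _ _ f).mp hf
      interval_cases k
      · omega
      · omega
      · omega
      · exact absurd ⟨f, h'⟩ (show ¬∃ g : Fin 3 → Fin 3, TTP' 3 3 g by decide)
    · have hmem : ∃ f : Fin 4 → Fin 2, TTP' 4 2 f := by decide
      obtain ⟨f0, hf0⟩ := hmem
      refine sSup_eq' ⟨f0, (ttp_iff _ _ f0).mpr hf0⟩ ?_
      rintro k ⟨f, hf⟩
      have h3 := ttp_le_three f hf
      have h' := (ttp_iff _ _ f).mp hf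
      interval_cases k
      · omega
      · omega
      · omega
      · exact absurd ⟨f, h'⟩ (show ¬∃ g : Fin 4 → Fin 3, TTP' 4 3 g by decide)
  · intro hn
    unfold TTr
    have hmem : ∃ f : Fin n → Fin 3, IsTTPartition (pathGraph n) f := by
      rcases eq_or_lt_of_le hn with h | h
      · subst h
        have : ∃ f : Fin 5 → Fin 3, TTP' 5 3 f := by decide
        obtain ⟨f, hf⟩ := this
        exact ⟨f, (ttp_iff _ _ f).mpr hf⟩
      · exact mem_three h
    exact sSup_eq' hmem fun k hk => hk.elim fun f hf => ttp_le_three f hf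
end

section
/- The tournament transitivity of the cycle C_n on n vertices equals 1 if n = 3, equals 2 if n ∈ {4, 5}, and equals 3 if n ≥ 6. -/
open SimpleGraph

variable {V : Type*}

/-! A vertex in part `j` of a transitive partition has a neighbour in each of the parts
`0, …, j - 1`, so a transitive partition has at most `Δ + 1` parts; on a cycle that is `3`.
In a complete graph any nonempty part dominates every other one, so `C₃ = K₃` admits only the
one-part partition. For `n ≥ 4` the rest against a single vertex is a tournament transitive
partition, and for `n ≥ 6` so is `V ∖ {0, 1, 4}, {0, 4}, {1}`. No three-part partition of `C₄`
or `C₅` qualifies, which is checked exhaustively. -/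

section Partitions

variable {G : SimpleGraph V} {k : ℕ} {f : V → Fin k}

theorem IsTTPartition.isTrPartition (h : IsTTPartition G f) : IsTrPartition G f :=
  ⟨h.1, fun i j hij => (h.2 i j hij).1⟩

theorem IsTrPartition.val_le_degree (h : IsTrPartition G f) (v : V)
    [Fintype (G.neighborSet v)] : (f v : ℕ) ≤ G.degree v := by
  classical
  have hsub : Finset.Iio (f v) ⊆ (G.neighborFinset v).image f := by
    intro i hi
    obtain ⟨a, hai, hav⟩ := h.2 i (f v) (Finset.mem_Iio.mp hi) v rfl
    exact Finset.mem_image.mpr ⟨a, (G.mem_neighborFinset v a).mpr hav.symm, hai⟩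
  calc (f v : ℕ) = (Finset.Iio (f v)).card := (Fin.card_Iio _).symm
    _ ≤ ((G.neighborFinset v).image f).card := Finset.card_le_card hsub
    _ ≤ G.degree v := Finset.card_image_le

theorem IsTrPartition.le_maxDegree_add_one [Fintype V] [DecidableRel G.Adj]
    (h : IsTrPartition G f) : k ≤ G.maxDegree + 1 := by
  obtain _ | k := k
  · exact Nat.zero_le _
  obtain ⟨v, hv⟩ := h.1 (Fin.last k)
  have := (h.val_le_degree v).trans (G.degree_le_maxDegree v)
  rw [hv, Fin.val_last] at this
  omega

theorem IsTTPartition.le_one_of_top (h : IsTTPartition (⊤ : SimpleGraph V) f) :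
    k ≤ 1 := by
  by_contra! hk
  refine (h.2 ⟨0, by omega⟩ ⟨1, hk⟩ (Fin.mk_lt_mk.mpr Nat.zero_lt_one)).2 fun b hb => ?_
  obtain ⟨a, ha⟩ := h.1 ⟨1, hk⟩
  refine ⟨a, ha, fun hab => ?_⟩
  simp_all [Fin.ext_iff]

theorem isTTPartition_const [Nonempty V] : IsTTPartition G (fun _ => (0 : Fin 1)) :=
  ⟨fun _ => ⟨Classical.arbitrary V, Subsingleton.elim _ _⟩, fun i j hij => absurd hij (by omega)⟩

theorem isTTPartition_ite_eq [DecidableEq V] {u v w : V} (hwv : G.Adj w v) (huv : u ≠ v)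
    (hvu : ¬ G.Adj v u) : IsTTPartition G (fun x => if x = v then (1 : Fin 2) else 0) := by
  refine ⟨fun i => ?_, fun i j hij => ?_⟩
  · fin_cases i
    · exact ⟨u, by simp [huv]⟩
    · exact ⟨v, by simp⟩
  obtain ⟨rfl, rfl⟩ : i = 0 ∧ j = 1 := by omega
  refine ⟨fun b hb => ⟨w, ?_⟩, fun hdom => ?_⟩
  · obtain rfl : b = v := by simpa using hb
    simp [hwv.ne, hwv]
  obtain ⟨a, ha, hau⟩ := hdom u (by simp [huv])
  obtain rfl : a = v := by simpa using ha
  exact hvu hau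

theorem TTr_eq {m : ℕ} (hm : ∃ f : V → Fin m, IsTTPartition G f)
    (hle : ∀ k (f : V → Fin k), IsTTPartition G f → k ≤ m) : TTr G = m :=
  IsGreatest.csSup_eq ⟨hm, fun k ⟨f, hf⟩ => hle k f hf⟩

end Partitions

section Cycle

theorem cycleGraph_adj_iff_val {n : ℕ} (hn : 2 ≤ n) {u v : Fin n} :
    (cycleGraph n).Adj u v ↔
      u.val + 1 = v.val ∨ v.val + 1 = u.val ∨
        (u.val = 0 ∧ v.val + 1 = n) ∨ (v.val = 0 ∧ u.val + 1 = n) := by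
  rw [cycleGraph_adj']
  rcases lt_trichotomy u v with h | rfl | h
  · rw [Fin.coe_sub_iff_lt.mpr h, Fin.coe_sub_iff_le.mpr h.le]
    have := Fin.lt_def.mp h
    omega
  · rw [Fin.coe_sub_iff_le.mpr le_rfl]
    omega
  · rw [Fin.coe_sub_iff_le.mpr h.le, Fin.coe_sub_iff_lt.mpr h]
    have := Fin.lt_def.mp h
    omega

theorem IsTTPartition.le_three_of_cycleGraph {n k : ℕ} (hn : 3 ≤ n) {f : Fin n → Fin k}
    (h : IsTTPartition (cycleGraph n) f) : k ≤ 3 := by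
  obtain ⟨m, rfl⟩ : ∃ m, n = m + 3 := ⟨n - 3, by omega⟩
  have hdeg : (cycleGraph (m + 3)).maxDegree ≤ 2 :=
    (cycleGraph (m + 3)).maxDegree_le_of_forall_degree_le 2 fun _ =>
      cycleGraph_degree_three_le.le
  have := h.isTrPartition.le_maxDegree_add_one
  omega

theorem exists_isTTPartition_cycleGraph_two {n : ℕ} (hn : 4 ≤ n) :
    ∃ f : Fin n → Fin 2, IsTTPartition (cycleGraph n) f := by
  have hadj {u v : Fin n} := cycleGraph_adj_iff_val (u := u) (v := v) (by omega)
  refine ⟨_, isTTPartition_ite_eq (u := ⟨2, by omega⟩) (v := ⟨0, by omega⟩) (w := ⟨1, by omega⟩)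
    ?_ ?_ ?_⟩
  · rw [hadj]; dsimp only; omega
  · simp [Fin.ext_iff]
  · rw [hadj]; dsimp only; omega

def cycleTTPartition (n : ℕ) (v : Fin n) : Fin 3 :=
  if v.val = 1 then 2 else if v.val = 0 ∨ v.val = 4 then 1 else 0

section cycleTTPartition

variable {n : ℕ} {v : Fin n}

theorem cycleTTPartition_eq_zero_iff :
    cycleTTPartition n v = 0 ↔ v.val ≠ 0 ∧ v.val ≠ 1 ∧ v.val ≠ 4 := by
  unfold cycleTTPartition; split_ifs <;> simp_all; omega

theorem cycleTTPartition_eq_one_iff : cycleTTPartition n v = 1 ↔ v.val = 0 ∨ v.val = 4 := by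
  unfold cycleTTPartition; split_ifs <;> simp_all

theorem cycleTTPartition_eq_two_iff : cycleTTPartition n v = 2 ↔ v.val = 1 := by
  unfold cycleTTPartition; split_ifs <;> simp_all

end cycleTTPartition

theorem isTTPartition_cycleTTPartition {n : ℕ} (hn : 6 ≤ n) :
    IsTTPartition (cycleGraph n) (cycleTTPartition n) := by
  have hadj {u v : Fin n} := cycleGraph_adj_iff_val (u := u) (v := v) (by omega)
  simp only [IsTTPartition, Dominates, Set.mem_preimage, Set.mem_singleton_iff]
  refine ⟨fun i => ?_, fun i j hij => ?_⟩
  · fin_cases i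
    · exact ⟨⟨2, by omega⟩, cycleTTPartition_eq_zero_iff.mpr (by simp)⟩
    · exact ⟨⟨0, by omega⟩, cycleTTPartition_eq_one_iff.mpr (by simp)⟩
    · exact ⟨⟨1, by omega⟩, cycleTTPartition_eq_two_iff.mpr (by simp)⟩
  fin_cases i <;> fin_cases j <;>
    simp only [Fin.reduceFinMk, Fin.isValue, Fin.reduceLT] at hij ⊢ <;>
    simp only [cycleTTPartition_eq_zero_iff, cycleTTPartition_eq_one_iff,
      cycleTTPartition_eq_two_iff, hadj] <;>
    refine ⟨fun b hb => ?_, fun hdom => ?_⟩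
  -- for each pair `i < j`: neighbours in `Vᵢ` of the vertices of `Vⱼ`, then a vertex of `Vᵢ`
  -- with no neighbour in `Vⱼ`
  · rcases hb with hb | hb
    · exact ⟨⟨n - 1, by omega⟩, by dsimp only; omega⟩
    · exact ⟨⟨3, by omega⟩, by dsimp only; omega⟩
  · obtain ⟨a, ha, hab⟩ := hdom ⟨2, by omega⟩ (by dsimp only; omega)
    dsimp only at hab
    omega
  · exact ⟨⟨2, by omega⟩, by dsimp only; omega⟩
  · obtain ⟨a, ha, hab⟩ := hdom ⟨3, by omega⟩ (by dsimp only; omega)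
    dsimp only at hab
    omega
  · exact ⟨⟨0, by omega⟩, by dsimp only; omega⟩
  · obtain ⟨a, ha, hab⟩ := hdom ⟨4, by omega⟩ (by dsimp only; omega)
    dsimp only at hab
    omega

set_option maxRecDepth 10000 in
theorem not_isTTPartition_cycleGraph_fin_three {n : ℕ} (hn : n = 4 ∨ n = 5)
    (f : Fin n → Fin 3) : ¬ IsTTPartition (cycleGraph n) f := by
  rcases hn with rfl | rfl <;> revert f <;>
    simp only [IsTTPartition, Dominates, Set.mem_preimage, Set.mem_singleton_iff] <;> decide

end Cycle

theorem stmt_8 (n : ℕ) :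
    (n = 3 → TTr (cycleGraph n) = 1) ∧
    (n = 4 ∨ n = 5 → TTr (cycleGraph n) = 2) ∧
    (6 ≤ n → TTr (cycleGraph n) = 3) := by
  refine ⟨?_, fun hn => ?_, fun hn => ?_⟩
  · rintro rfl
    refine TTr_eq ⟨_, isTTPartition_const⟩ fun k f hf => ?_
    rw [cycleGraph_three_eq_top] at hf
    exact hf.le_one_of_top
  · refine TTr_eq (exists_isTTPartition_cycleGraph_two (by omega)) fun k f hf => ?_
    have := hf.le_three_of_cycleGraph (by omega)
    obtain hk | rfl : k ≤ 2 ∨ k = 3 := by omega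
    · exact hk
    · exact absurd hf (not_isTTPartition_cycleGraph_fin_three hn f)
  · exact TTr_eq ⟨_, isTTPartition_cycleTTPartition hn⟩ fun k f hf =>
      hf.le_three_of_cycleGraph (by omega)
end

section
/- If H is an induced subgraph of a graph G, then TTr(H) ≤ TTr(G). -/
open SimpleGraph

variable {V : Type*}

theorem stmt_10 [Fintype V] (G : SimpleGraph V) (s : Set V) :
    TTr (G.induce s) ≤ TTr G := by
  classical
  have hbdd : BddAbove {k | ∃ f : V → Fin k, IsTTPartition G f} := by
    refine ⟨Fintype.card V, fun k hk => ?_⟩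
    obtain ⟨f, hf, -⟩ := hk
    simpa using Fintype.card_le_of_surjective f hf
  apply csSup_le'
  rintro k ⟨f, hsurj, hdom⟩
  rcases Nat.eq_zero_or_pos k with rfl | hk
  · exact Nat.zero_le _
  -- extend f to all of V, sending vertices outside s to class 0
  set g : V → Fin k := fun v => if h : v ∈ s then f ⟨v, h⟩ else ⟨0, hk⟩ with hg
  have hgmem : ∀ (v : V) (h : v ∈ s), g v = f ⟨v, h⟩ := fun v h => dif_pos h
  apply le_csSup hbdd
  refine ⟨g, ?_, ?_⟩
  · intro i
    obtain ⟨a, ha⟩ := hsurj i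
    exact ⟨a.1, by rw [hgmem a.1 a.2]; simpa using ha⟩
  · intro i j hij
    obtain ⟨hd, hnd⟩ := hdom i j hij
    constructor
    · intro b hb
      by_cases hbs : b ∈ s
      · have hfb : f ⟨b, hbs⟩ = j := by
          have := hgmem b hbs
          simp only [Set.mem_preimage, Set.mem_singleton_iff] at hb
          rw [this] at hb; exact hb
        obtain ⟨a, ha, hadj⟩ := hd ⟨b, hbs⟩ hfb
        refine ⟨a.1, ?_, hadj⟩
        simp only [Set.mem_preimage, Set.mem_singleton_iff]
        rw [hgmem a.1 a.2]
        simpa using ha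
      · exfalso
        simp only [Set.mem_preimage, Set.mem_singleton_iff] at hb
        have : g b = ⟨0, hk⟩ := dif_neg hbs
        rw [this] at hb
        have : (⟨0, hk⟩ : Fin k) ≤ i := Fin.mk_le_of_le_val (Nat.zero_le _)
        exact absurd hij (not_lt.2 (hb ▸ this))
    · intro hcon
      apply hnd
      intro b hb
      have hgb : g b.1 = i := by rw [hgmem b.1 b.2]; simpa using hb
      obtain ⟨a, ha, hadj⟩ := hcon b.1 hgb
      simp only [Set.mem_preimage, Set.mem_singleton_iff] at ha
      have has : a ∈ s := by
        by_contra habs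
        have : g a = ⟨0, hk⟩ := dif_neg habs
        rw [this] at ha
        have hj0 : j = ⟨0, hk⟩ := ha.symm
        have : i < (⟨0, hk⟩ : Fin k) := hj0 ▸ hij
        exact absurd this (not_lt.2 (Fin.mk_le_of_le_val (Nat.zero_le _)))
      refine ⟨⟨a, has⟩, ?_, hadj⟩
      simp only [Set.mem_preimage, Set.mem_singleton_iff]
      rw [hgmem a has] at ha
      exact ha
end

section
/- Let G be the disjoint union of t copies of the complete graph K_n, where t ≤ n. Then TTr(G) = t. -/
open SimpleGraph

variable {V : Type*}

theorem stmt_11 (t n : ℕ) (h : t ≤ n) :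
    TTr (SimpleGraph.fromRel (fun u v : Fin t × Fin n => u.1 = v.1)) = t := by
  set G := SimpleGraph.fromRel (fun u v : Fin t × Fin n => u.1 = v.1) with hG
  have hadj : ∀ a b : Fin t × Fin n, G.Adj a b ↔ a ≠ b ∧ a.1 = b.1 := by
    intro a b
    rw [hG, SimpleGraph.fromRel_adj]
    constructor
    · rintro ⟨hne, hc | hc⟩
      · exact ⟨hne, hc⟩
      · exact ⟨hne, hc.symm⟩
    · rintro ⟨hne, hc⟩; exact ⟨hne, Or.inl hc⟩
  have hmem : t ∈ {k | ∃ f : (Fin t × Fin n) → Fin k, IsTTPartition G f} := by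
    refine ⟨fun p => ⟨min p.1.val p.2.val, lt_of_le_of_lt (min_le_left _ _) p.1.isLt⟩, ?_, ?_⟩
    · intro i
      refine ⟨(i, ⟨i.val, lt_of_lt_of_le i.isLt h⟩), ?_⟩
      ext
      simp
    · intro i j hij
      constructor
      · rintro b hb
        simp only [Set.mem_preimage, Set.mem_singleton_iff] at hb
        have hbv : min b.1.val b.2.val = j.val := congrArg Fin.val hb
        have hic : i.val < b.1.val := by
          have := Fin.lt_iff_val_lt_val.mp hij
          omega
        refine ⟨(b.1, ⟨i.val, lt_of_lt_of_le i.isLt h⟩), ?_, ?_⟩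
        · simp only [Set.mem_preimage, Set.mem_singleton_iff]
          exact Fin.ext (by simp; omega)
        · rw [hadj]
          refine ⟨?_, rfl⟩
          intro heq
          have h2 : i.val = b.2.val := congrArg (fun p : Fin t × Fin n => (p.2 : ℕ)) heq
          have := Fin.lt_iff_val_lt_val.mp hij
          omega
      · intro hdom
        have hb : (fun p : Fin t × Fin n => (⟨min p.1.val p.2.val,
            lt_of_le_of_lt (min_le_left _ _) p.1.isLt⟩ : Fin t))
            (i, ⟨i.val, lt_of_lt_of_le i.isLt h⟩) = i := Fin.ext (by simp)
        obtain ⟨a, ha, hadj'⟩ := hdom (i, ⟨i.val, lt_of_lt_of_le i.isLt h⟩)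
          (by simp [hb])
        simp only [Set.mem_preimage, Set.mem_singleton_iff] at ha
        rw [hadj] at hadj'
        obtain ⟨hne, hc⟩ := hadj'
        have hav : min a.1.val a.2.val = j.val := congrArg Fin.val ha
        have : a.1.val = i.val := congrArg Fin.val hc
        have := Fin.lt_iff_val_lt_val.mp hij
        omega
  have hub : ∀ k ∈ {k | ∃ f : (Fin t × Fin n) → Fin k, IsTTPartition G f}, k ≤ t := by
    rintro k ⟨f, hsurj, hdom⟩
    have hx : ∀ i : Fin k, ∃ x : Fin t × Fin n, f x = i ∧
        ∀ j : Fin k, i < j → ∀ y, y.1 = x.1 → f y ≠ j := by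
      intro i
      by_cases hi : i.val + 1 < k
      · set i1 : Fin k := ⟨i.val + 1, hi⟩ with hi1
        have hii1 : i < i1 := by simp [hi1, Fin.lt_iff_val_lt_val]
        have hnd := (hdom i i1 hii1).2
        simp only [Dominates, not_forall, not_exists] at hnd
        obtain ⟨x, hxmem, hno⟩ := hnd
        simp only [Set.mem_preimage, Set.mem_singleton_iff] at hxmem
        push_neg at hno
        refine ⟨x, hxmem, ?_⟩
        intro j hj y hy hfy
        have hij : i.val < j.val := Fin.lt_iff_val_lt_val.mp hj
        rcases eq_or_lt_of_le (show i1 ≤ j from by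
          rw [Fin.le_iff_val_le_val]; simpa [hi1] using hij) with heq | hlt
        · -- j = i1 : y itself is a neighbour of x in V_{i1}
          refine hno y ?_ ?_
          · simp only [Set.mem_preimage, Set.mem_singleton_iff]; rw [hfy, ← heq]
          · rw [hadj]
            refine ⟨?_, hy⟩
            intro hyx
            rw [hyx, hxmem] at hfy
            exact absurd hfy (Fin.ne_of_lt hj)
        · -- i1 < j : y has a neighbour in V_{i1} which is adjacent to x
          obtain ⟨a, hamem, haadj⟩ := (hdom i1 j hlt).1 y
            (by simp only [Set.mem_preimage, Set.mem_singleton_iff]; exact hfy)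
          simp only [Set.mem_preimage, Set.mem_singleton_iff] at hamem
          rw [hadj] at haadj
          refine hno a ?_ ?_
          · simp only [Set.mem_preimage, Set.mem_singleton_iff]; exact hamem
          · rw [hadj]
            refine ⟨?_, haadj.2.trans hy⟩
            intro hax
            rw [hax, hxmem] at hamem
            exact absurd hamem (Fin.ne_of_lt hii1)
      · obtain ⟨x, hxv⟩ := hsurj i
        refine ⟨x, hxv, ?_⟩
        intro j hj y hy hfy
        have := Fin.lt_iff_val_lt_val.mp hj
        have := j.isLt
        omega
    choose x hfx hprop using hx
    have hginj : Function.Injective (fun i => (x i).1) := by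
      intro i j hij
      by_contra hne
      rcases lt_or_gt_of_ne hne with hlt | hlt
      · exact hprop i j hlt (x j) hij.symm (hfx j)
      · exact hprop j i hlt (x i) hij (hfx i)
    have := Fintype.card_le_of_injective _ hginj
    simpa using this
  exact le_antisymm (csSup_le ⟨t, hmem⟩ hub) (le_csSup ⟨t, hub⟩ hmem)
end

section
/- Let G be a disjoint union of Δ(G)+1 copies of a graph G (denote this union by 𝒢). Then Tr(G) = k if and only if TTr(𝒢) = k. In particular, TTr(𝒢) = Tr(G). -/
/-!
Restricting a transitive partition of the disjoint union to a copy that meets the top class gives a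
transitive partition of `G` with the same number of classes, since a vertex is only dominated from
inside its own copy. Conversely, a transitive partition `f` of `G` has at most `Δ(G) + 1` classes
(a vertex of the top class has a neighbour in every other class), so with `Δ(G) + 1` copies we may
put vertex `v` of copy `t` into class `min (f v) t`. Transitivity is inherited from `f`, and copy
`i` has no vertex in a class above `i`, so the vertex of copy `i` taken from class `j > i` of `f`
is a vertex of class `i` that class `j` does not dominate.
-/

open SimpleGraph

variable {V : Type*}

/-- The disjoint union of `m` copies of `G`. -/
def copies (m : ℕ) (G : SimpleGraph V) : SimpleGraph (Fin m × V) where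
  Adj u v := u.1 = v.1 ∧ G.Adj u.2 v.2
  symm := ⟨fun u v h => ⟨h.1.symm, G.symm.symm _ _ h.2⟩⟩
  loopless := ⟨fun u h => G.loopless.irrefl u.2 h.2⟩

variable {G : SimpleGraph V}

lemma IsTTPartition.isTrPartition_s16 {k : ℕ} {f : V → Fin k} (hf : IsTTPartition G f) :
    IsTrPartition G f :=
  ⟨hf.1, fun i j hij => (hf.2 i j hij).1⟩

lemma IsTrPartition.card_le_maxDegree_add_one [Fintype V] [DecidableRel G.Adj] {k : ℕ}
    {f : V → Fin k} (hf : IsTrPartition G f) : k ≤ G.maxDegree + 1 := by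
  cases k with
  | zero => omega
  | succ n =>
    obtain ⟨v, hv⟩ := hf.1 (Fin.last n)
    have hdom : ∀ i : Fin n, ∃ w, f w = i.castSucc ∧ G.Adj v w := fun i => by
      obtain ⟨w, hw, hadj⟩ :=
        hf.2 i.castSucc (Fin.last n) (Fin.castSucc_lt_last i) v (by simp [hv])
      exact ⟨w, hw, hadj.symm⟩
    choose w hw hadj using hdom
    have hinj : Function.Injective w := fun i j hij =>
      Fin.castSucc_injective n (by rw [← hw i, ← hw j, hij])
    have hcard : n ≤ G.degree v := by
      simpa using Finset.card_le_card_of_injOn (s := Finset.univ) w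
        (fun i _ => (G.mem_neighborFinset v (w i)).2 (hadj i)) hinj.injOn
    have := G.degree_le_maxDegree v
    omega

def minWithCopy {m k : ℕ} (f : V → Fin k) (p : Fin m × V) : Fin k :=
  ⟨min (f p.2).val p.1.val, lt_of_le_of_lt (min_le_left _ _) (f p.2).isLt⟩

lemma val_minWithCopy {m k : ℕ} (f : V → Fin k) (p : Fin m × V) :
    (minWithCopy f p).val = min (f p.2).val p.1.val := rfl

lemma IsTrPartition.isTTPartition_copies {m k : ℕ} {f : V → Fin k} (hf : IsTrPartition G f)
    (hkm : k ≤ m) : IsTTPartition (copies m G) (minWithCopy f) := by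
  refine ⟨fun j => ?_, fun i j hij => ⟨?_, ?_⟩⟩
  · obtain ⟨v, hv⟩ := hf.1 j
    refine ⟨(⟨j, by omega⟩, v), Fin.ext ?_⟩
    simp [val_minWithCopy, hv]
  · rintro ⟨t, v⟩ hv
    have hv : min (f v).val t.val = j.val := congrArg Fin.val hv
    obtain ⟨w, hw, hadj⟩ := hf.2 i (f v) (by rw [Fin.lt_def]; omega) v rfl
    have hw : f w = i := hw
    refine ⟨(t, w), Fin.ext ?_, rfl, hadj⟩
    simp only [val_minWithCopy, hw]
    omega
  · obtain ⟨v, hv⟩ := hf.1 j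
    have hi : i.val < m := by omega
    intro hdom
    obtain ⟨⟨s, a⟩, ha, hs, -⟩ :=
      hdom (⟨i, hi⟩, v) (Fin.ext (by simp [val_minWithCopy, hv, hij.le]))
    have ha : min (f a).val s.val = j.val := congrArg Fin.val ha
    have hs : s.val = i.val := congrArg Fin.val hs
    rw [Fin.lt_def] at hij
    omega

section Restrict

variable {m k : ℕ} {g : Fin m × V → Fin k}

lemma IsTrPartition.dominates_restrict_copy (hg : IsTrPartition (copies m G) g) (t : Fin m)
    {i j : Fin k} (hij : i < j) :
    Dominates G ((fun v => g (t, v)) ⁻¹' {i}) ((fun v => g (t, v)) ⁻¹' {j}) := by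
  intro v hv
  obtain ⟨⟨s, a⟩, ha, hs, hadj⟩ := hg.2 i j hij (t, v) hv
  obtain rfl : s = t := hs
  exact ⟨a, ha, hadj⟩

lemma IsTrPartition.exists_restrict_copy (hm : 0 < m) (hg : IsTrPartition (copies m G) g) :
    ∃ f : V → Fin k, IsTrPartition G f := by
  cases k with
  | zero => exact ⟨fun v => (g (⟨0, hm⟩, v)).elim0, fun i => i.elim0, fun i => i.elim0⟩
  | succ n =>
    obtain ⟨⟨t, v⟩, hv⟩ := hg.1 (Fin.last n)
    refine ⟨fun w => g (t, w), fun i => ?_, fun i j => hg.dominates_restrict_copy t⟩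
    rcases (Fin.le_last i).eq_or_lt with rfl | hlt
    · exact ⟨v, hv⟩
    · obtain ⟨a, ha, -⟩ := hg.dominates_restrict_copy t hlt v hv
      exact ⟨a, ha⟩

end Restrict

lemma exists_isTTPartition_copies_iff [Fintype V] [DecidableRel G.Adj] (k : ℕ) :
    (∃ g : Fin (G.maxDegree + 1) × V → Fin k, IsTTPartition (copies (G.maxDegree + 1) G) g) ↔
      ∃ f : V → Fin k, IsTrPartition G f :=
  ⟨fun ⟨_, hg⟩ => hg.isTrPartition_s16.exists_restrict_copy G.maxDegree.succ_pos,
    fun ⟨_, hf⟩ => ⟨_, hf.isTTPartition_copies hf.card_le_maxDegree_add_one⟩⟩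

theorem stmt_16 [Fintype V] (G : SimpleGraph V) [DecidableRel G.Adj] :
    (∀ k : ℕ, Tr G = k ↔ TTr (copies (G.maxDegree + 1) G) = k) ∧
      TTr (copies (G.maxDegree + 1) G) = Tr G := by
  have hTTr : TTr (copies (G.maxDegree + 1) G) = Tr G := by
    unfold TTr Tr
    simp only [exists_isTTPartition_copies_iff]
  exact ⟨fun k => by rw [hTTr], hTTr⟩
end

section
/- Let G be a connected graph with TTr(G) = k ≥ 3. Then there exists a tournament transitive partition {V₁, ..., V_k} of G of size k such that |V_k| = 1 and |V_{k−1}| = 2; moreover, writing V_{k−1} = {x, y} and V_k = {z}, one can ensure xz ∈ E(G) and yz ∉ E(G). -/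
open SimpleGraph

variable {V : Type*}

lemma notDominates_iff (G : SimpleGraph V) (A B : Set V) :
    ¬ Dominates G A B ↔ ∃ b ∈ B, ∀ a ∈ A, ¬ G.Adj a b := by
  unfold Dominates
  push_neg
  rfl

theorem stmt_17 [Fintype V] (G : SimpleGraph V) (hc : G.Connected)
    (k : ℕ) (h3 : 3 ≤ k) (hk : TTr G = k) :
    ∃ (f : V → Fin k) (x y z : V), IsTTPartition G f ∧ x ≠ y ∧
      f ⁻¹' {(⟨k - 1, by omega⟩ : Fin k)} = {z} ∧
      f ⁻¹' {(⟨k - 2, by omega⟩ : Fin k)} = {x, y} ∧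
      G.Adj x z ∧ ¬ G.Adj y z := by
  classical
  -- Step 1: extract a tournament transitive partition of size k
  have hbdd : BddAbove {k' : ℕ | ∃ f : V → Fin k', IsTTPartition G f} := by
    refine ⟨Fintype.card V, fun m hm => ?_⟩
    obtain ⟨f, hf, -⟩ := hm
    simpa using Fintype.card_le_of_surjective f hf
  have hkS : ∃ f : V → Fin k, IsTTPartition G f := by
    rcases Set.eq_empty_or_nonempty {k' : ℕ | ∃ f : V → Fin k', IsTTPartition G f} with h | h
    · unfold TTr at hk
      rw [h, csSup_empty] at hk
      simp only [Nat.bot_eq_zero] at hk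
      omega
    · have hmem := Nat.sSup_mem h hbdd
      unfold TTr at hk
      rw [hk] at hmem
      exact hmem
  obtain ⟨f, hsurj, hdom⟩ := hkS
  have htk : k - 1 < k := by omega
  have hsk : k - 2 < k := by omega
  have h0k : 0 < k := by omega
  set top : Fin k := ⟨k - 1, htk⟩ with htopdef
  set sec : Fin k := ⟨k - 2, hsk⟩ with hsecdef
  set zer : Fin k := ⟨0, h0k⟩ with hzerdef
  have hst : sec < top := by
    simp only [Fin.lt_def, htopdef, hsecdef]
    omega
  have hts : top ≠ sec := by
    simp only [Fin.ne_iff_vne, htopdef, hsecdef]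
    omega
  have hzt : zer ≠ top := by
    simp only [Fin.ne_iff_vne, htopdef, hzerdef]
    omega
  have hzs : zer ≠ sec := by
    simp only [Fin.ne_iff_vne, hsecdef, hzerdef]
    omega
  -- z : a vertex in the top class
  obtain ⟨z, hz⟩ := hsurj top
  -- x : a neighbour of z in the second class
  obtain ⟨hd, hnd⟩ := hdom sec top hst
  obtain ⟨x, hx, hxz⟩ := hd z (by simp [hz])
  simp only [Set.mem_preimage, Set.mem_singleton_iff] at hx
  -- y : a vertex in the second class with no neighbour in the top class
  obtain ⟨y, hy, hyn⟩ := (notDominates_iff G _ _).mp hnd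
  simp only [Set.mem_preimage, Set.mem_singleton_iff] at hy
  have hyn' : ∀ a, f a = top → ¬ G.Adj a y := by
    intro a ha
    exact hyn a (by simp [ha])
  have hyz : ¬ G.Adj y z := fun h => hyn' z hz h.symm
  have hxy : x ≠ y := fun h => hyz (h ▸ hxz)
  -- the modified partition
  set g : V → Fin k := fun v =>
    if (f v = top ∧ v ≠ z) ∨ (f v = sec ∧ v ≠ x ∧ v ≠ y) then zer else f v with hgdef
  -- basic facts about g
  have gval : ∀ v, g v = if (f v = top ∧ v ≠ z) ∨ (f v = sec ∧ v ≠ x ∧ v ≠ y) then zer else f v :=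
    fun v => rfl
  have gA : ∀ v (i : Fin k), i ≠ zer → g v = i → f v = i := by
    intro v i hi hv
    rw [gval] at hv
    by_cases h : (f v = top ∧ v ≠ z) ∨ (f v = sec ∧ v ≠ x ∧ v ≠ y)
    · rw [if_pos h] at hv
      exact absurd hv.symm hi
    · rwa [if_neg h] at hv
  have gB : ∀ v, f v ≠ top → f v ≠ sec → g v = f v := by
    intro v h1 h2
    rw [gval, if_neg]
    rintro (⟨h, -⟩ | ⟨h, -⟩)
    · exact h1 h
    · exact h2 h
  have gz : g z = top := by
    rw [gval, if_neg]
    · exact hz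
    · rintro (⟨-, h⟩ | ⟨h, -⟩)
      · exact h rfl
      · exact hts (hz.symm.trans h)
  have gx : g x = sec := by
    rw [gval, if_neg]
    · exact hx
    · rintro (⟨h, -⟩ | ⟨-, h, -⟩)
      · exact hts (h.symm.trans hx)
      · exact h rfl
  have gy : g y = sec := by
    rw [gval, if_neg]
    · exact hy
    · rintro (⟨h, -⟩ | ⟨-, -, h⟩)
      · exact hts (h.symm.trans hy)
      · exact h rfl
  have gtop : ∀ v, g v = top ↔ v = z := by
    intro v
    constructor
    · intro hv
      have hf : f v = top := gA v top (Ne.symm hzt) hv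
      by_contra hvz
      rw [gval, if_pos (Or.inl ⟨hf, hvz⟩)] at hv
      exact hzt hv
    · intro hv
      rw [hv]; exact gz
  have gsec : ∀ v, g v = sec ↔ (v = x ∨ v = y) := by
    intro v
    constructor
    · intro hv
      have hf : f v = sec := gA v sec (Ne.symm hzs) hv
      by_contra hvxy
      push_neg at hvxy
      rw [gval, if_pos (Or.inr ⟨hf, hvxy.1, hvxy.2⟩)] at hv
      exact hzs hv
    · rintro (hv | hv) <;> rw [hv]
      · exact gx
      · exact gy
  -- i < j implies i ≠ top
  have hitop : ∀ i j : Fin k, i < j → i ≠ top := by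
    intro i j hij h
    have := j.isLt
    rw [Fin.lt_def, h] at hij
    simp only [htopdef] at hij
    omega
  -- i < j and i = sec implies j = top
  have hisec : ∀ i j : Fin k, i < j → i = sec → j = top := by
    intro i j hij h
    have := j.isLt
    rw [Fin.lt_def, h] at hij
    simp only [hsecdef] at hij
    apply Fin.ext
    simp only [htopdef]
    omega
  -- g is a TT partition
  have hgtt : IsTTPartition G g := by
    constructor
    · intro i
      by_cases h1 : i = top
      · exact ⟨z, by rw [gz, h1]⟩
      by_cases h2 : i = sec
      · exact ⟨x, by rw [gx, h2]⟩
      obtain ⟨v, hv⟩ := hsurj i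
      exact ⟨v, by rw [gB v (hv ▸ h1) (hv ▸ h2), hv]⟩
    · intro i j hij
      have hjz : j ≠ zer := by
        intro h
        rw [Fin.lt_def, h] at hij
        simp only [hzerdef] at hij
        omega
      have hit : i ≠ top := hitop i j hij
      constructor
      · -- domination
        intro b hb
        simp only [Set.mem_preimage, Set.mem_singleton_iff] at hb
        have hfb : f b = j := gA b j hjz hb
        by_cases hi : i = sec
        · -- then j = top, b = z, use x
          have hjt : j = top := hisec i j hij hi
          have hbz : b = z := (gtop b).mp (by rw [hb, hjt])
          refine ⟨x, by simp [gx, hi], hbz ▸ hxz⟩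
        · obtain ⟨a, ha, hadj⟩ := (hdom i j hij).1 b (by simp [hfb])
          simp only [Set.mem_preimage, Set.mem_singleton_iff] at ha
          refine ⟨a, by simp [gB a (ha ▸ hit) (ha ▸ hi), ha], hadj⟩
      · -- non-domination
        rw [notDominates_iff]
        by_cases hi : i = sec
        · -- j = top, use y
          have hjt : j = top := hisec i j hij hi
          refine ⟨y, by simp [gy, hi], ?_⟩
          intro a ha
          simp only [Set.mem_preimage, Set.mem_singleton_iff] at ha
          have haz : a = z := (gtop a).mp (by rw [ha, hjt])
          rw [haz]
          exact hyn' z hz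
        · obtain ⟨b, hb, hbn⟩ := (notDominates_iff G _ _).mp (hdom i j hij).2
          simp only [Set.mem_preimage, Set.mem_singleton_iff] at hb
          refine ⟨b, by simp [gB b (hb ▸ hit) (hb ▸ hi), hb], ?_⟩
          intro a ha
          simp only [Set.mem_preimage, Set.mem_singleton_iff] at ha
          exact hbn a (by simp [gA a j hjz ha])
  refine ⟨g, x, y, z, hgtt, hxy, ?_, ?_, hxz, hyz⟩
  · ext v
    simp only [Set.mem_preimage, Set.mem_singleton_iff]
    exact gtop v
  · ext v
    simp only [Set.mem_preimage, Set.mem_singleton_iff, Set.mem_insert_iff]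
    exact gsec v
end

section
/- Let G = (X ∪ Y, E) be a Type-III bipartite chain graph, i.e., a bipartite chain graph that is not complete bipartite, with chain orderings σ_X = (x₁, ..., x_{n₁}) and σ_Y = (y₁, ..., y_{n₂}), where t is the maximum integer such that G contains K_{t,t} as an induced subgraph, and both x_{t+1}y_t ∈ E(G) and x_t y_{t+1} ∈ E(G). Then TTr(G) < Tr(G). -/
open SimpleGraph

variable {V : Type*}

/-- Pigeonhole: `t+1` pairwise disjoint sets of naturals cannot each contain an
element `< t`. -/
lemma aux_pigeon (t : ℕ) (U : Fin (t+1) → Set ℕ)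
    (hdisj : ∀ i j a, a ∈ U i → a ∈ U j → i = j)
    (hne : ∀ i, ∃ a ∈ U i, a < t) : False := by
  choose c hc hlt using hne
  have hinj : Function.Injective (fun i : Fin (t+1) => (⟨c i, hlt i⟩ : Fin t)) := by
    intro i j hij
    have hcc : c i = c j := congrArg Fin.val hij
    exact hdisj i j (c i) (hc i) (hcc ▸ hc j)
  have hcard := Fintype.card_le_of_injective _ hinj
  simp only [Fintype.card_fin] at hcard
  omega

/-- Core combinatorial lemma: with a relation `R` between "x-indices" and
"y-indices" containing all low–low pairs and no high–high pairs (low = `< t`),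
there is no tournament transitive system of `t+2` parts whose last part
contains an x-index. -/
lemma aux_no_tt_core (t : ℕ) (R : ℕ → ℕ → Prop)
    (hLL : ∀ a b, a < t → b < t → R a b)
    (hHH : ∀ a b, t ≤ a → t ≤ b → ¬ R a b)
    (S T : Fin (t+2) → Set ℕ)
    (hSd : ∀ i j a, a ∈ S i → a ∈ S j → i = j)
    (hTd : ∀ i j a, a ∈ T i → a ∈ T j → i = j)
    (dom1 : ∀ i j : Fin (t+2), i < j → ∀ a ∈ S j, ∃ b ∈ T i, R a b)
    (dom2 : ∀ i j : Fin (t+2), i < j → ∀ b ∈ T j, ∃ a ∈ S i, R a b)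
    (nd : ∀ i j : Fin (t+2), i < j →
      (∃ a ∈ S i, ∀ b ∈ T j, ¬ R a b) ∨ (∃ b ∈ T i, ∀ a ∈ S j, ¬ R a b))
    (hne : ∀ i : Fin (t+2), (S i).Nonempty ∨ (T i).Nonempty)
    (hS : (S ⟨t+1, by omega⟩).Nonempty) : False := by
  -- every part up to `t` contains a y-index
  have hTne : ∀ i : Fin (t+2), i.val ≤ t → (T i).Nonempty := by
    intro i hi
    obtain ⟨a, ha⟩ := hS
    obtain ⟨b, hb, -⟩ := dom1 i ⟨t+1, by omega⟩
      (by (try simp only [Fin.lt_def, Fin.val_mk]); omega) a ha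
    exact ⟨b, hb⟩
  -- every part before `t` contains an x-index
  have hSne : ∀ i : Fin (t+2), i.val < t → (S i).Nonempty := by
    intro i hi
    obtain ⟨b, hb⟩ := hTne ⟨t, by omega⟩ (le_refl t)
    obtain ⟨a, ha, -⟩ := dom2 i ⟨t, by omega⟩
      (by (try simp only [Fin.lt_def, Fin.val_mk]); omega) b hb
    exact ⟨a, ha⟩
  -- pigeonhole: some part among 0..t has all its y-indices high
  have pigA : ∃ i : Fin (t+2), i.val ≤ t ∧ ∀ b ∈ T i, t ≤ b := by
    by_contra hcon
    push_neg at hcon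
    apply aux_pigeon t (fun i : Fin (t+1) => T ⟨i.val, by have := i.isLt; omega⟩)
    · intro i j a hai haj
      have h2 := hTd _ _ a hai haj
      have h3 := congrArg Fin.val h2
      exact Fin.ext h3
    · intro i
      exact hcon ⟨i.val, by have := i.isLt; omega⟩
        (by have := i.isLt; (try simp only [Fin.val_mk]); omega)
  -- pigeonhole: some part among 0..t-1, t+1 has all its x-indices high
  have pigB : ∃ j : Fin (t+2), (j.val < t ∨ j.val = t+1) ∧ ∀ a ∈ S j, t ≤ a := by
    by_contra hcon
    push_neg at hcon
    apply aux_pigeon t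
      (fun i : Fin (t+1) => S (if i.val < t then ⟨i.val, by have := i.isLt; omega⟩
        else ⟨t+1, by omega⟩))
    · intro i j a hai haj
      have h2 := hSd _ _ a hai haj
      have h3 := congrArg Fin.val h2
      split_ifs at h3 <;> simp only [Fin.val_mk] at h3 <;>
        exact Fin.ext (by have := i.isLt; have := j.isLt; omega)
    · intro i
      by_cases h : i.val < t
      · rw [if_pos h]
        exact hcon ⟨i.val, by have := i.isLt; omega⟩ (Or.inl h)
      · rw [if_neg h]
        exact hcon ⟨t+1, by omega⟩ (Or.inr rfl)
  obtain ⟨istar, histar, highT⟩ := pigA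
  obtain ⟨jstar, hjloc, highS⟩ := pigB
  have hTi : (T istar).Nonempty := hTne istar histar
  have hSj : (S jstar).Nonempty := by
    rcases hjloc with h | h
    · exact hSne jstar h
    · have hje : jstar = ⟨t+1, by omega⟩ := Fin.ext (by (try simp only [Fin.val_mk]); omega)
      rw [hje]; exact hS
  rcases lt_trichotomy istar jstar with hlt | heq | hgt
  · obtain ⟨a, ha⟩ := hSj
    obtain ⟨b, hb, hR⟩ := dom1 istar jstar hlt a ha
    exact hHH a b (highS a ha) (highT b hb) hR
  · -- the all-high part `istar`
    subst heq
    have hmval : istar.val < t := by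
      rcases hjloc with h | h
      · exact h
      · omega
    have lowAll : ∀ l : Fin (t+2), istar < l →
        (∀ a ∈ S l, a < t) ∧ (∀ b ∈ T l, b < t) := by
      intro l hml
      constructor
      · intro a ha
        by_contra hc
        push_neg at hc
        obtain ⟨b, hb, hR⟩ := dom1 istar l hml a ha
        exact hHH a b hc (highT b hb) hR
      · intro b hb
        by_contra hc
        push_neg at hc
        obtain ⟨a, ha, hR⟩ := dom2 istar l hml b hb
        exact hHH a b (highS a ha) hc hR
    have lowpair : ∀ p2 p3 : Fin (t+2), p2 < p3 → istar < p2 → istar < p3 →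
        (∃ a ∈ S p2, a < t) ∧ (∃ b ∈ T p2, b < t) := by
      intro p2 p3 h23 hm2 hm3
      rcases nd p2 p3 h23 with ⟨a, haS, hnb⟩ | ⟨b, hbT, hna⟩
      · have hT3 : ∀ b ∈ T p3, False := fun b hb =>
          hnb b hb (hLL a b ((lowAll p2 hm2).1 a haS) ((lowAll p3 hm3).2 b hb))
        have hS3 : (S p3).Nonempty := by
          rcases hne p3 with h | ⟨b, hb⟩
          · exact h
          · exact absurd hb (fun h' => hT3 b h')
        obtain ⟨a3, ha3⟩ := hS3
        obtain ⟨b2, hb2, -⟩ := dom1 p2 p3 h23 a3 ha3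
        exact ⟨⟨a, haS, (lowAll p2 hm2).1 a haS⟩, ⟨b2, hb2, (lowAll p2 hm2).2 b2 hb2⟩⟩
      · have hS3 : ∀ a ∈ S p3, False := fun a ha =>
          hna a ha (hLL a b ((lowAll p3 hm3).1 a ha) ((lowAll p2 hm2).2 b hbT))
        have hT3 : (T p3).Nonempty := by
          rcases hne p3 with ⟨a, ha⟩ | h
          · exact absurd ha (fun h' => hS3 a h')
          · exact h
        obtain ⟨b3, hb3⟩ := hT3
        obtain ⟨a2, ha2, -⟩ := dom2 p2 p3 h23 b3 hb3
        exact ⟨⟨a2, ha2, (lowAll p2 hm2).1 a2 ha2⟩, ⟨b, hbT, (lowAll p2 hm2).2 b hbT⟩⟩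
    by_cases hcase : istar.val + 2 ≤ t
    · -- three all-low parts after istar
      have h12 : (⟨istar.val+1, by omega⟩ : Fin (t+2)) < ⟨istar.val+2, by omega⟩ := by
        (try simp only [Fin.lt_def, Fin.val_mk]); omega
      have h23 : (⟨istar.val+2, by omega⟩ : Fin (t+2)) < ⟨istar.val+3, by omega⟩ := by
        (try simp only [Fin.lt_def, Fin.val_mk]); omega
      have hm1 : istar < ⟨istar.val+1, by omega⟩ := by
        (try simp only [Fin.lt_def, Fin.val_mk]); omega
      have hm2' : istar < ⟨istar.val+2, by omega⟩ := by
        (try simp only [Fin.lt_def, Fin.val_mk]); omega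
      have hm3' : istar < ⟨istar.val+3, by omega⟩ := by
        (try simp only [Fin.lt_def, Fin.val_mk]); omega
      obtain ⟨⟨a2, ha2S, ha2low⟩, ⟨b2, hb2T, hb2low⟩⟩ :=
        lowpair ⟨istar.val+2, by omega⟩ ⟨istar.val+3, by omega⟩ h23 hm2' hm3'
      rcases nd ⟨istar.val+1, by omega⟩ ⟨istar.val+2, by omega⟩ h12 with
        ⟨a, haS, hnb⟩ | ⟨b, hbT, hna⟩
      · exact hnb b2 hb2T (hLL a b2 ((lowAll _ hm1).1 a haS) hb2low)
      · exact hna a2 ha2S (hLL a2 b ha2low ((lowAll _ hm1).2 b hbT))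
    · -- istar.val = t-1 : count low x-indices
      have hmeq : istar.val + 1 = t := by omega
      have h23 : (⟨t, by omega⟩ : Fin (t+2)) < ⟨t+1, by omega⟩ := by
        (try simp only [Fin.lt_def, Fin.val_mk]); omega
      have hm2' : istar < ⟨t, by omega⟩ := by
        (try simp only [Fin.lt_def, Fin.val_mk]); omega
      have hm3' : istar < ⟨t+1, by omega⟩ := by
        (try simp only [Fin.lt_def, Fin.val_mk]); omega
      obtain ⟨⟨a2, ha2S, ha2low⟩, -⟩ := lowpair ⟨t, by omega⟩ ⟨t+1, by omega⟩ h23 hm2' hm3'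
      have hpart_t : ∀ p : Fin (t+2), p.val = t → ∃ a ∈ S p, a < t := by
        intro p hp
        have hpe : p = ⟨t, by omega⟩ := Fin.ext (by (try simp only [Fin.val_mk]); omega)
        rw [hpe]
        exact ⟨a2, ha2S, ha2low⟩
      obtain ⟨alast, halast⟩ := hS
      have halow : alast < t := (lowAll ⟨t+1, by omega⟩ hm3').1 alast halast
      have hpart_t1 : ∀ p : Fin (t+2), p.val = t+1 → ∃ a ∈ S p, a < t := by
        intro p hp
        have hpe : p = ⟨t+1, by omega⟩ := Fin.ext (by (try simp only [Fin.val_mk]); omega)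
        rw [hpe]
        exact ⟨alast, halast, halow⟩
      have lowBefore : ∀ l : Fin (t+2), l < istar → ∃ a ∈ S l, a < t := by
        intro l hlm
        obtain ⟨bm, hbm⟩ := hTi
        obtain ⟨a, ha, hR⟩ := dom2 l istar hlm bm hbm
        refine ⟨a, ha, ?_⟩
        by_contra hc
        exact hHH a bm (by omega) (highT bm hbm) hR
      apply aux_pigeon t
        (fun i : Fin (t+1) => S (if i.val + 1 < t then ⟨i.val, by have := i.isLt; omega⟩
          else ⟨i.val + 1, by have := i.isLt; omega⟩))
      · intro i j a hai haj
        have h2 := hSd _ _ a hai haj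
        have h3 := congrArg Fin.val h2
        split_ifs at h3 <;> simp only [Fin.val_mk] at h3 <;>
          exact Fin.ext (by have := i.isLt; have := j.isLt; omega)
      · intro i
        by_cases h : i.val + 1 < t
        · rw [if_pos h]
          exact lowBefore ⟨i.val, by have := i.isLt; omega⟩
            (by (try simp only [Fin.lt_def, Fin.val_mk]); omega)
        · rw [if_neg h]
          by_cases h2 : i.val + 1 = t
          · exact hpart_t _ (by (try simp only [Fin.val_mk]); omega)
          · have hit : i.val = t := by have := i.isLt; omega
            exact hpart_t1 _ (by (try simp only [Fin.val_mk]); omega)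
  · obtain ⟨b, hb⟩ := hTi
    obtain ⟨a, ha, hR⟩ := dom2 jstar istar hgt b hb
    exact hHH a b (highS a ha) (highT b hb) hR

/-- Symmetrized version of the core lemma: no TT system of `t+2` parts at all. -/
lemma aux_no_tt (t : ℕ) (R : ℕ → ℕ → Prop)
    (hLL : ∀ a b, a < t → b < t → R a b)
    (hHH : ∀ a b, t ≤ a → t ≤ b → ¬ R a b)
    (S T : Fin (t+2) → Set ℕ)
    (hSd : ∀ i j a, a ∈ S i → a ∈ S j → i = j)
    (hTd : ∀ i j a, a ∈ T i → a ∈ T j → i = j)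
    (dom1 : ∀ i j : Fin (t+2), i < j → ∀ a ∈ S j, ∃ b ∈ T i, R a b)
    (dom2 : ∀ i j : Fin (t+2), i < j → ∀ b ∈ T j, ∃ a ∈ S i, R a b)
    (nd : ∀ i j : Fin (t+2), i < j →
      (∃ a ∈ S i, ∀ b ∈ T j, ¬ R a b) ∨ (∃ b ∈ T i, ∀ a ∈ S j, ¬ R a b))
    (hne : ∀ i : Fin (t+2), (S i).Nonempty ∨ (T i).Nonempty) : False := by
  rcases hne ⟨t+1, by omega⟩ with hS | hT
  · exact aux_no_tt_core t R hLL hHH S T hSd hTd dom1 dom2 nd hne hS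
  · exact aux_no_tt_core t (fun b a => R a b)
      (fun a b ha hb => hLL b a hb ha)
      (fun a b ha hb hR => hHH b a hb ha hR)
      T S hTd hSd
      (fun i j hij => dom2 i j hij)
      (fun i j hij => dom1 i j hij)
      (fun i j hij => (nd i j hij).symm)
      (fun i => (hne i).symm)
      hT

/-- The transitive partition of size `t+2` witnessing `Tr G ≥ t+2`. -/
def auxF (n₁ n₂ t : ℕ) : Fin n₁ ⊕ Fin n₂ → Fin (t+2) := fun v =>
  match v with
  | .inl a => if h : a.val + 1 < t then ⟨a.val+1, by omega⟩
      else if h2 : a.val + 1 = t then ⟨t, by omega⟩ else ⟨0, by omega⟩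
  | .inr b => if h : b.val + 1 < t then ⟨b.val+1, by omega⟩
      else if h2 : b.val + 1 = t then ⟨t+1, by omega⟩ else ⟨0, by omega⟩

theorem stmt_18 (n₁ n₂ t : ℕ) (G : SimpleGraph (Fin n₁ ⊕ Fin n₂))
    (hbipX : ∀ i i' : Fin n₁, ¬ G.Adj (.inl i) (.inl i'))
    (hbipY : ∀ j j' : Fin n₂, ¬ G.Adj (.inr j) (.inr j'))
    (hchainX : ∀ i i' : Fin n₁, i ≤ i' →
      ∀ j : Fin n₂, G.Adj (.inl i') (.inr j) → G.Adj (.inl i) (.inr j))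
    (hchainY : ∀ j j' : Fin n₂, j ≤ j' →
      ∀ i : Fin n₁, G.Adj (.inl i) (.inr j') → G.Adj (.inl i) (.inr j))
    (hnotcomplete : ∃ (i : Fin n₁) (j : Fin n₂), ¬ G.Adj (.inl i) (.inr j))
    (ht : IsGreatest {s | s ≤ n₁ ∧ s ≤ n₂ ∧ ∀ (i : Fin n₁) (j : Fin n₂),
      i.val < s → j.val < s → G.Adj (.inl i) (.inr j)} t)
    (h1t : 1 ≤ t) (htn₁ : t < n₁) (htn₂ : t < n₂)
    (he1 : G.Adj (.inl ⟨t, htn₁⟩) (.inr ⟨t - 1, by omega⟩))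
    (he2 : G.Adj (.inl ⟨t - 1, by omega⟩) (.inr ⟨t, htn₂⟩)) :
    TTr G < Tr G := by
  -- complete bipartite adjacency on the low part
  have hK : ∀ (a b : ℕ) (ha : a < n₁) (hb : b < n₂), a < t → b < t →
      G.Adj (.inl ⟨a, ha⟩) (.inr ⟨b, hb⟩) :=
    fun a b ha hb hat hbt => ht.1.2.2 ⟨a, ha⟩ ⟨b, hb⟩ hat hbt
  -- no high-high adjacency
  have hHH : ∀ (a b : ℕ) (ha : a < n₁) (hb : b < n₂), t ≤ a → t ≤ b →
      ¬ G.Adj (.inl ⟨a, ha⟩) (.inr ⟨b, hb⟩) := by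
    intro a b ha hb hat hbt hadj
    have hmem : (t+1) ∈ {s | s ≤ n₁ ∧ s ≤ n₂ ∧ ∀ (i : Fin n₁) (j : Fin n₂),
        i.val < s → j.val < s → G.Adj (.inl i) (.inr j)} := by
      refine ⟨by omega, by omega, fun i j hi hj => ?_⟩
      have step1 : G.Adj (.inl i) (.inr ⟨b, hb⟩) :=
        hchainX i ⟨a, ha⟩ (by (try simp only [Fin.le_def, Fin.val_mk]); omega) ⟨b, hb⟩ hadj
      exact hchainY j ⟨b, hb⟩ (by (try simp only [Fin.le_def, Fin.val_mk]); omega) i step1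
    have := ht.2 hmem
    omega
  -- upper bound: TTr G ≤ t + 1
  have hTTr : TTr G ≤ t + 1 := by
    have h1mem : 1 ∈ {k | ∃ f : Fin n₁ ⊕ Fin n₂ → Fin k, IsTTPartition G f} := by
      refine ⟨fun _ => 0, fun c => ⟨Sum.inl ⟨0, by omega⟩, Subsingleton.elim _ _⟩, ?_⟩
      intro i j hij
      rw [Fin.lt_def] at hij
      have hi := i.isLt
      have hj := j.isLt
      omega
    apply csSup_le ⟨1, h1mem⟩
    rintro k ⟨f, hsurj, hcond⟩
    by_contra hk
    push_neg at hk
    have hk2 : t + 2 ≤ k := by omega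
    have hιmono : ∀ i j : Fin (t+2), i < j → Fin.castLE hk2 i < Fin.castLE hk2 j := by
      intro i j hij
      rw [Fin.lt_def] at hij ⊢
      simpa using hij
    have hιinj : Function.Injective (Fin.castLE hk2) := Fin.castLE_injective hk2
    refine aux_no_tt t
      (fun a b => ∃ (ha : a < n₁) (hb : b < n₂), G.Adj (.inl ⟨a, ha⟩) (.inr ⟨b, hb⟩))
      (fun a b hat hbt => ⟨by omega, by omega, hK a b (by omega) (by omega) hat hbt⟩)
      (by rintro a b hat hbt ⟨ha, hb, hadj⟩; exact hHH a b ha hb hat hbt hadj)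
      (fun i => {a | ∃ ha : a < n₁, f (.inl ⟨a, ha⟩) = Fin.castLE hk2 i})
      (fun i => {b | ∃ hb : b < n₂, f (.inr ⟨b, hb⟩) = Fin.castLE hk2 i})
      ?_ ?_ ?_ ?_ ?_ ?_
    · rintro i j a ⟨ha, hfi⟩ ⟨ha', hfj⟩
      apply hιinj
      rw [← hfi, ← hfj]
    · rintro i j b ⟨hb, hfi⟩ ⟨hb', hfj⟩
      apply hιinj
      rw [← hfi, ← hfj]
    · -- dom1
      rintro i j hij a ⟨ha, hfa⟩
      have hdom := (hcond (Fin.castLE hk2 i) (Fin.castLE hk2 j) (hιmono i j hij)).1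
      obtain ⟨u, hu, hadj⟩ := hdom (Sum.inl ⟨a, ha⟩)
        (by simp only [Set.mem_preimage, Set.mem_singleton_iff]; exact hfa)
      simp only [Set.mem_preimage, Set.mem_singleton_iff] at hu
      cases u with
      | inl x => exact absurd hadj (hbipX _ _)
      | inr y => exact ⟨y.val, ⟨y.isLt, hu⟩, ha, y.isLt, hadj.symm⟩
    · -- dom2
      rintro i j hij b ⟨hb, hfb⟩
      have hdom := (hcond (Fin.castLE hk2 i) (Fin.castLE hk2 j) (hιmono i j hij)).1
      obtain ⟨u, hu, hadj⟩ := hdom (Sum.inr ⟨b, hb⟩)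
        (by simp only [Set.mem_preimage, Set.mem_singleton_iff]; exact hfb)
      simp only [Set.mem_preimage, Set.mem_singleton_iff] at hu
      cases u with
      | inr y => exact absurd hadj (hbipY _ _)
      | inl x => exact ⟨x.val, ⟨x.isLt, hu⟩, x.isLt, hb, hadj⟩
    · -- nd
      intro i j hij
      have hnd := (hcond (Fin.castLE hk2 i) (Fin.castLE hk2 j) (hιmono i j hij)).2
      unfold Dominates at hnd
      push_neg at hnd
      obtain ⟨v, hv, hall⟩ := hnd
      simp only [Set.mem_preimage, Set.mem_singleton_iff] at hv
      cases v with
      | inl x =>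
        left
        refine ⟨x.val, ⟨x.isLt, hv⟩, ?_⟩
        rintro b ⟨hbn, hfb⟩ ⟨ha', hb', hadj⟩
        exact hall (Sum.inr ⟨b, hbn⟩)
          (by simp only [Set.mem_preimage, Set.mem_singleton_iff]; exact hfb) hadj.symm
      | inr y =>
        right
        refine ⟨y.val, ⟨y.isLt, hv⟩, ?_⟩
        rintro a ⟨han, hfa⟩ ⟨ha', hb', hadj⟩
        exact hall (Sum.inl ⟨a, han⟩)
          (by simp only [Set.mem_preimage, Set.mem_singleton_iff]; exact hfa) hadj
    · -- nonemptiness from surjectivity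
      intro i
      obtain ⟨v, hv⟩ := hsurj (Fin.castLE hk2 i)
      cases v with
      | inl x => exact Or.inl ⟨x.val, x.isLt, hv⟩
      | inr y => exact Or.inr ⟨y.val, y.isLt, hv⟩
  -- lower bound: t + 2 ≤ Tr G
  have hTr : t + 2 ≤ Tr G := by
    have hbdd : BddAbove {k | ∃ f : Fin n₁ ⊕ Fin n₂ → Fin k, IsTrPartition G f} := by
      refine ⟨n₁ + n₂, ?_⟩
      rintro k ⟨f, hsurj, -⟩
      have := Fintype.card_le_of_surjective f hsurj
      simpa using this
    apply le_csSup hbdd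
    refine ⟨auxF n₁ n₂ t, ?_, ?_⟩
    · -- surjectivity
      intro c
      have hc := c.isLt
      by_cases h0 : c.val = 0
      · refine ⟨Sum.inl ⟨t, htn₁⟩, ?_⟩
        show auxF n₁ n₂ t (Sum.inl ⟨t, htn₁⟩) = c
        simp only [auxF]
        rw [dif_neg (by (try simp only [Fin.val_mk]); omega),
          dif_neg (by (try simp only [Fin.val_mk]); omega)]
        exact Fin.ext (by (try simp only [Fin.val_mk]); omega)
      · by_cases h1 : c.val < t
        · refine ⟨Sum.inl ⟨c.val - 1, by omega⟩, ?_⟩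
          show auxF n₁ n₂ t (Sum.inl ⟨c.val - 1, by omega⟩) = c
          simp only [auxF]
          rw [dif_pos (by (try simp only [Fin.val_mk]); omega)]
          exact Fin.ext (by (try simp only [Fin.val_mk]); omega)
        · by_cases h2 : c.val = t
          · refine ⟨Sum.inl ⟨t - 1, by omega⟩, ?_⟩
            show auxF n₁ n₂ t (Sum.inl ⟨t - 1, by omega⟩) = c
            simp only [auxF]
            rw [dif_neg (by (try simp only [Fin.val_mk]); omega),
              dif_pos (by (try simp only [Fin.val_mk]); omega)]
            exact Fin.ext (by (try simp only [Fin.val_mk]); omega)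
          · refine ⟨Sum.inr ⟨t - 1, by omega⟩, ?_⟩
            show auxF n₁ n₂ t (Sum.inr ⟨t - 1, by omega⟩) = c
            simp only [auxF]
            rw [dif_neg (by (try simp only [Fin.val_mk]); omega),
              dif_pos (by (try simp only [Fin.val_mk]); omega)]
            exact Fin.ext (by (try simp only [Fin.val_mk]); omega)
    · -- domination
      intro i j hij
      rw [Fin.lt_def] at hij
      have hjlt := j.isLt
      intro v hv
      simp only [Set.mem_preimage, Set.mem_singleton_iff] at hv
      -- v is a low vertex
      have hlow : (∃ a : Fin n₁, v = Sum.inl a ∧ a.val < t) ∨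
          (∃ b : Fin n₂, v = Sum.inr b ∧ b.val < t) := by
        cases v with
        | inl a =>
          left
          refine ⟨a, rfl, ?_⟩
          simp only [auxF] at hv
          split_ifs at hv with hc1 hc2
          · omega
          · omega
          · exfalso
            have h4 := congrArg Fin.val hv
            simp only [Fin.val_mk] at h4
            omega
        | inr b =>
          right
          refine ⟨b, rfl, ?_⟩
          simp only [auxF] at hv
          split_ifs at hv with hc1 hc2
          · omega
          · omega
          · exfalso
            have h4 := congrArg Fin.val hv
            simp only [Fin.val_mk] at h4
            omega
      by_cases hi0 : i.val = 0
      · rcases hlow with ⟨a, rfl, hat⟩ | ⟨b, rfl, hbt⟩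
        · refine ⟨Sum.inr ⟨t, htn₂⟩, ?_, ?_⟩
          · simp only [Set.mem_preimage, Set.mem_singleton_iff, auxF]
            rw [dif_neg (by (try simp only [Fin.val_mk]); omega),
              dif_neg (by (try simp only [Fin.val_mk]); omega)]
            exact Fin.ext (by (try simp only [Fin.val_mk]); omega)
          · exact (hchainX a ⟨t - 1, by omega⟩
              (by (try simp only [Fin.le_def, Fin.val_mk]); omega) ⟨t, htn₂⟩ he2).symm
        · refine ⟨Sum.inl ⟨t, htn₁⟩, ?_, ?_⟩
          · simp only [Set.mem_preimage, Set.mem_singleton_iff, auxF]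
            rw [dif_neg (by (try simp only [Fin.val_mk]); omega),
              dif_neg (by (try simp only [Fin.val_mk]); omega)]
            exact Fin.ext (by (try simp only [Fin.val_mk]); omega)
          · exact hchainY b ⟨t - 1, by omega⟩
              (by (try simp only [Fin.le_def, Fin.val_mk]); omega) ⟨t, htn₁⟩ he1
      · by_cases hit : i.val < t
        · -- part i = {x_{i-1}, y_{i-1}}
          rcases hlow with ⟨a, rfl, hat⟩ | ⟨b, rfl, hbt⟩
          · refine ⟨Sum.inr ⟨i.val - 1, by omega⟩, ?_, ?_⟩
            · simp only [Set.mem_preimage, Set.mem_singleton_iff, auxF]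
              rw [dif_pos (by (try simp only [Fin.val_mk]); omega)]
              exact Fin.ext (by (try simp only [Fin.val_mk]); omega)
            · exact (hK a.val (i.val - 1) a.isLt (by omega) hat (by omega)).symm
          · refine ⟨Sum.inl ⟨i.val - 1, by omega⟩, ?_, ?_⟩
            · simp only [Set.mem_preimage, Set.mem_singleton_iff, auxF]
              rw [dif_pos (by (try simp only [Fin.val_mk]); omega)]
              exact Fin.ext (by (try simp only [Fin.val_mk]); omega)
            · exact hK (i.val - 1) b.val (by omega) b.isLt (by omega) hbt
        · -- i.val = t, so j.val = t+1 and v = y_{t-1}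
          have hival : i.val = t := by have := i.isLt; omega
          have hjval : j.val = t + 1 := by omega
          have hvb : ∃ b : Fin n₂, v = Sum.inr b ∧ b.val + 1 = t := by
            cases v with
            | inl a =>
              exfalso
              simp only [auxF] at hv
              split_ifs at hv with hc1 hc2 <;>
                · have h4 := congrArg Fin.val hv
                  simp only [Fin.val_mk] at h4
                  omega
            | inr b =>
              refine ⟨b, rfl, ?_⟩
              simp only [auxF] at hv
              split_ifs at hv with hc1 hc2
              · have h4 := congrArg Fin.val hv
                simp only [Fin.val_mk] at h4
                omega
              · exact hc2
              · have h4 := congrArg Fin.val hv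
                simp only [Fin.val_mk] at h4
                omega
          obtain ⟨b, rfl, hbval⟩ := hvb
          refine ⟨Sum.inl ⟨t - 1, by omega⟩, ?_, ?_⟩
          · simp only [Set.mem_preimage, Set.mem_singleton_iff, auxF]
            rw [dif_neg (by (try simp only [Fin.val_mk]); omega),
              dif_pos (by (try simp only [Fin.val_mk]); omega)]
            exact Fin.ext (by (try simp only [Fin.val_mk]); omega)
          · exact hK (t - 1) b.val (by omega) b.isLt (by omega) (by omega)
  omega
end
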